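/- arXiv:1207.0871 — 3 statements merged into one kernel-verified Lean document; each statement's English description precedes it below -/
import Mathlib

section
/- Every non-empty observable hyperproperty is a liveness hyperproperty. That is, if P is a non-empty set of sets of infinite traces such that every S ∈ P has a finite set of finite traces T with T ≤ S and every set of infinite traces S' with T ≤ S' satisfies S' ∈ P, then for every finite set of finite traces T₀ there exists a set of infinite traces S' ∈ P with T₀ ≤ S'. -/
variable {σ : Type*}

/-- A finite trace `t` is a prefix of the infinite trace `u`. -/
def PrefixOf (t : List σ) (u : ℕ → σ) : Prop := ∀ i : Fin t.length, u i = t.get i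

/-- `TraceLe S T`: every finite trace in `S` has an infinite extension in `T` (the relation `S ≤ T`). -/
def TraceLe (S : Finset (List σ)) (T : Set (ℕ → σ)) : Prop :=
  ∀ t ∈ S, ∃ u ∈ T, PrefixOf t u

/-- Observable hyperproperty. -/
def IsObservable (P : Set (Set (ℕ → σ))) : Prop :=
  ∀ S ∈ P, ∃ T : Finset (List σ), TraceLe T S ∧ ∀ S' : Set (ℕ → σ), TraceLe T S' → S' ∈ P

/-- Liveness hyperproperty. -/
def IsLiveness (P : Set (Set (ℕ → σ))) : Prop :=
  ∀ S : Finset (List σ), ∃ S' ∈ P, TraceLe S S'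

/-- k-observable hyperproperty. -/
def IsKObservable (k : ℕ) (P : Set (Set (ℕ → σ))) : Prop :=
  ∀ S ∈ P, ∃ T : Finset (List σ), TraceLe T S ∧ T.card ≤ k ∧
    ∀ S' : Set (ℕ → σ), TraceLe T S' → S' ∈ P

/-- Safety hyperproperty. -/
def IsSafety (P : Set (Set (ℕ → σ))) : Prop :=
  ∀ S ∉ P, ∃ T : Finset (List σ), TraceLe T S ∧ ∀ S' : Set (ℕ → σ), TraceLe T S' → S' ∉ P


theorem nonempty_observable_is_liveness [Nonempty σ] (P : Set (Set (ℕ → σ)))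
    (hne : P.Nonempty) (hobs : IsObservable P) : IsLiveness P := by
  have hext : ∀ T : Finset (List σ), TraceLe T (Set.univ : Set (ℕ → σ)) := by
    intro T t _
    refine ⟨fun i => t.getD i (Classical.arbitrary σ), Set.mem_univ _, ?_⟩
    intro i
    simp [List.getD_eq_getElem, i.isLt]
  obtain ⟨S, hS⟩ := hne
  obtain ⟨T, _, hT⟩ := hobs S hS
  intro S₀
  exact ⟨Set.univ, hT _ (hext T), hext S₀⟩
end

section
/- The only hyperproperty that is both a safety hyperproperty and a liveness hyperproperty is the set of all sets of infinite traces. -/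
variable {σ : Type*}

theorem safety_and_liveness_is_univ [Nonempty σ] (P : Set (Set (ℕ → σ)))
    (hs : IsSafety P) (hl : IsLiveness P) : P = Set.univ := by
  ext S
  simp only [Set.mem_univ, iff_true]
  by_contra hS
  obtain ⟨T, _, hT⟩ := hs S hS
  obtain ⟨S', hS', hle⟩ := hl T
  exact hT S' hle hS'
end

section
/- For a deterministic program M with uniformly distributed high input, the min-entropy based quantitative information flow equals the logarithm of the number of distinct output values: ME[U](M) = log₂ |{o : ∃ h, M(h) = o}|. -/
open Finset Real

variable {H O : Type*} [Fintype H] [Nonempty H] [DecidableEq O]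

/-- The set of inputs mapped to output `o` (the preimage `M⁻¹(o)`). -/
def fiber (M : H → O) (o : O) : Finset H := Finset.univ.filter (fun h => M h = o)

/-- The set of outputs of `M` (the image/range of `M`). -/
def outputs (M : H → O) : Finset O := Finset.univ.image M


/-- `V[U](H)` : max prior guessing probability under the uniform distribution. -/
noncomputable def Vprior (H : Type*) [Fintype H] [Nonempty H] : ℝ :=
  Finset.univ.sup' Finset.univ_nonempty (fun _ : H => 1 / (Fintype.card H : ℝ))

/-- `V[U](H|O)` : expected posterior guessing probability,
using `μ(O=o) = |M⁻¹(o)|/|H|` and `max_h μ(H=h|O=o) = 1/|M⁻¹(o)|`. -/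
noncomputable def Vpost (M : H → O) : ℝ :=
  ∑ o ∈ outputs M, ((fiber M o).card : ℝ) / (Fintype.card H : ℝ) * (1 / ((fiber M o).card : ℝ))

/-- Min-entropy based QIF: `H∞[U](H) - H∞[U](H|O)`. -/
noncomputable def ME (M : H → O) : ℝ :=
  Real.logb 2 (1 / Vprior H) - Real.logb 2 (1 / Vpost M)

lemma fiber_card_pos (M : H → O) {o : O} (ho : o ∈ outputs M) :
    0 < ((fiber M o).card : ℝ) := by
  simp only [outputs, Finset.mem_image] at ho
  obtain ⟨h, _, rfl⟩ := ho
  have : h ∈ fiber M (M h) := by simp [fiber]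
  exact_mod_cast Finset.card_pos.mpr ⟨h, this⟩

lemma Vprior_eq : Vprior H = 1 / (Fintype.card H : ℝ) := by
  simp [Vprior]

lemma Vpost_eq (M : H → O) :
    Vpost M = ((outputs M).card : ℝ) / (Fintype.card H : ℝ) := by
  unfold Vpost
  rw [Finset.sum_congr rfl (fun o ho => ?_), Finset.sum_const, nsmul_eq_mul,
    mul_one_div]
  have hpos := fiber_card_pos M ho
  field_simp

theorem ME_eq_logb_card_outputs (M : H → O) :
    ME M = Real.logb 2 ((outputs M).card : ℝ) := by
  have hcard : (0 : ℝ) < (Fintype.card H : ℝ) := by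
    exact_mod_cast Fintype.card_pos
  have hout : (0 : ℝ) < ((outputs M).card : ℝ) := by
    have : (outputs M).Nonempty := ⟨M (Classical.arbitrary H), by simp [outputs]⟩
    exact_mod_cast Finset.card_pos.mpr this
  unfold ME
  rw [Vprior_eq, Vpost_eq, one_div_one_div, one_div_div]
  rw [Real.logb_div hcard.ne' hout.ne']
  ring
end
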